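/- Properties of pure Nash equilibria of the Discriminatory Auction: let v = (v_1,…,v_n) be arbitrary valuations with marginals m_i(j) = v_i(j) − v_i(j−1), n ≥ 2, and let b be a pure Nash equilibrium under discriminatory pricing (no bidder can strictly increase u_i^{v_i} by any unilateral deviation to a non-increasing non-negative bid vector). Let d = max{b_i(j) : i ∈ [n], j ∈ [k], j > x_i(b)} be the largest losing bid. Then: (i) for every bidder i with x_i(b) ≥ 1 and every j ∈ {1,…,x_i(b)}, b_i(j) = d; (ii) for every i ∈ [n] and every ℓ ∈ {1,…,x_i(b)}, ℓ·d ≤ Σ_{j = x_i(b)−ℓ+1}^{x_i(b)} m_i(j); (iii) for every i ∈ [n] and every ℓ ∈ {1,…,k − x_i(b)}, Σ_{j = x_i(b)+1}^{x_i(b)+ℓ} m_i(j) ≤ ℓ·d. -/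

import Mathlib

open Finset MeasureTheory

noncomputable section

/-- A bid vector for an auction of `k` units: entry `j` is the `(j+1)`-st marginal bid. -/
abbrev Bid (k : ℕ) := Fin k → ℝ

/-- Standard bid vectors: non-increasing and non-negative. -/
def StdBid {k : ℕ} (b : Bid k) : Prop :=
  (∀ j j' : Fin k, j ≤ j' → b j' ≤ b j) ∧ ∀ j, 0 ≤ b j

/-- Uniform bid vectors: a common value `c ≥ 0` on the first `q ≤ k` entries, `0` afterwards. -/
def UnifBid {k : ℕ} (b : Bid k) : Prop :=
  ∃ c : ℝ, 0 ≤ c ∧ ∃ q : ℕ, q ≤ k ∧ ∀ j : Fin k, b j = if (j : ℕ) < q then c else 0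

/-- A valuation on `{0,…,k}`: zero at `0`, non-negative and non-decreasing (up to `k`). -/
def IsValuation (k : ℕ) (v : ℕ → ℝ) : Prop :=
  v 0 = 0 ∧ (∀ x, 0 ≤ v x) ∧ ∀ x y : ℕ, x ≤ y → y ≤ k → v x ≤ v y

/-- Submodularity: non-increasing marginal values `v j - v (j-1)`. -/
def SubmodularVal (k : ℕ) (v : ℕ → ℝ) : Prop :=
  ∀ x y : ℕ, 1 ≤ x → x < y → y ≤ k → v y - v (y - 1) ≤ v x - v (x - 1)

/-- Subadditivity. -/
def SubadditiveVal (k : ℕ) (v : ℕ → ℝ) : Prop :=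
  ∀ x y : ℕ, x + y ≤ k → v (x + y) ≤ v x + v y

/-- `x` is a valid allocation for the bidding profile `b`:
all `k` units are allocated, and every winning bid is at least every losing bid. -/
def ValidAlloc {n k : ℕ} (b : Fin n → Bid k) (x : Fin n → ℕ) : Prop :=
  (∑ i, x i) = k ∧
  ∀ i i' : Fin n, ∀ j j' : Fin k, (j : ℕ) < x i → x i' ≤ (j' : ℕ) → b i' j' ≤ b i j

/-- The sum of the first `x` entries of a bid vector. -/
def winSum {k : ℕ} (b : Bid k) (x : ℕ) : ℝ :=
  ∑ j : Fin k, if (j : ℕ) < x then b j else 0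

/-- No-overbidding of the bid vector `b` with respect to the valuation `v`. -/
def NoOverbid {k : ℕ} (v : ℕ → ℝ) (b : Bid k) : Prop :=
  ∀ s : ℕ, 1 ≤ s → s ≤ k → winSum b s ≤ v s

/-- The `j`-th highest element of a multiset of reals (`j` is 1-indexed; default `0`). -/
def kthHighest (s : Multiset ℝ) (j : ℕ) : ℝ :=
  ((s.sort (· ≤ ·)).reverse).getD (j - 1) 0

/-- The multiset of all bids submitted under the profile `b`. -/
def allBids {n k : ℕ} (b : Fin n → Bid k) : Multiset ℝ :=
  (Finset.univ : Finset (Fin n × Fin k)).val.map fun p => b p.1 p.2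

/-- The multiset of all bids submitted by the bidders other than `i`. -/
def othersBids {n k : ℕ} (b : Fin n → Bid k) (i : Fin n) : Multiset ℝ :=
  ((Finset.univ : Finset (Fin n × Fin k)).filter (fun p => p.1 ≠ i)).val.map
    fun p => b p.1 p.2

/-- `β_j` (1-indexed): the `j`-th lowest among the `k` highest elements of `s`,
i.e. the `(k+1-j)`-th highest element of `s`. -/
def betaBid (k : ℕ) (s : Multiset ℝ) (j : ℕ) : ℝ := kthHighest s (k + 1 - j)

/-- `∑_{j=1}^{x} β_j(s)`. -/
def betaSum (k : ℕ) (s : Multiset ℝ) (x : ℕ) : ℝ := ∑ j ∈ Finset.Icc 1 x, betaBid k s j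

/-- The uniform price: the `(k+1)`-st highest of all submitted bids (`0` by default). -/
def price {n k : ℕ} (b : Fin n → Bid k) : ℝ := kthHighest (allBids b) (k + 1)

/-- Discriminatory-pricing utility of bidder `i` under the allocation rule `X`. -/
def uDisc {n k : ℕ} (X : (Fin n → Bid k) → Fin n → ℕ) (v : ℕ → ℝ) (i : Fin n)
    (b : Fin n → Bid k) : ℝ :=
  v (X b i) - winSum (b i) (X b i)

/-- Uniform-pricing utility of bidder `i` under the allocation rule `X`. -/
def uUnif {n k : ℕ} (X : (Fin n → Bid k) → Fin n → ℕ) (v : ℕ → ℝ) (i : Fin n)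
    (b : Fin n → Bid k) : ℝ :=
  v (X b i) - (X b i : ℝ) * price b

/-- The `x`-th entry (1-indexed) of a bid vector, with the convention that it is `0`
for `x = 0` (or `x > k`). -/
def lastWinBid {k : ℕ} (b : Bid k) (x : ℕ) : ℝ :=
  if h : 1 ≤ x ∧ x ≤ k then b ⟨x - 1, by omega⟩ else 0

/-- Social welfare of the allocation `x` under the valuation profile `v`. -/
def SW {n : ℕ} (v : Fin n → ℕ → ℝ) (x : Fin n → ℕ) : ℝ := ∑ i, v i (x i)

/-!
Let `d` be the largest losing bid. Every winning bid is at least `d`, and a winner who lowers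
her winning bids to `d` keeps the same allocation valid; in equilibrium she therefore pays no
more than `d` per unit, which forces all winning bids to equal `d`.
Bidder `i` may also bid `c > d` on exactly `m` units: since every other bid is at most `d`, any
valid allocation then gives her at least `m` units at total price `m c`, so
`v_i(m) - m c ≤ v_i(x_i) - x_i d`. Letting `c ↓ d` and telescoping the marginals between
`x_i - ℓ` and `x_i`, resp. `x_i` and `x_i + ℓ`, gives the two inequalities.
-/

section

variable {n k : ℕ}

def flatBid (m : ℕ) (c : ℝ) : Bid k := fun j => if (j : ℕ) < m then c else 0

lemma stdBid_flatBid {m : ℕ} {c : ℝ} (hc : 0 ≤ c) : StdBid (flatBid m c : Bid k) := by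
  refine ⟨fun j j' hjj' => ?_, fun j => ?_⟩ <;> unfold flatBid
  · have : (j : ℕ) ≤ j' := hjj'
    split_ifs <;> first | rfl | exact hc | omega
  · split_ifs <;> first | rfl | exact hc

lemma winSum_eq_sum_filter (b : Bid k) (q : ℕ) :
    winSum b q = ∑ j ∈ univ.filter (fun j : Fin k => (j : ℕ) < q), b j :=
  (sum_filter _ _).symm

lemma card_filter_val_lt_of_le {q : ℕ} (hq : q ≤ k) :
    #(univ.filter fun j : Fin k => (j : ℕ) < q) = q := by
  rw [Fin.card_filter_val_lt, min_eq_right hq]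

lemma winSum_flatBid {m q : ℕ} (c : ℝ) (hmq : m ≤ q) (hq : q ≤ k) :
    winSum (flatBid m c : Bid k) q = m * c := by
  have hfilter : (univ.filter fun j : Fin k => (j : ℕ) < q).filter (fun j : Fin k => (j : ℕ) < m)
      = univ.filter fun j : Fin k => (j : ℕ) < m := by
    ext j; simp only [mem_filter, mem_univ, true_and]; omega
  simp only [winSum_eq_sum_filter, flatBid]
  rw [← sum_filter, hfilter, sum_const,
    card_filter_val_lt_of_le (hmq.trans hq), nsmul_eq_mul]

lemma winSum_eq_mul {b : Bid k} {q : ℕ} {c : ℝ} (hq : q ≤ k)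
    (h : ∀ j : Fin k, (j : ℕ) < q → b j = c) : winSum b q = q * c := by
  rw [winSum_eq_sum_filter, sum_congr rfl fun j hj => h j (mem_filter.1 hj).2, sum_const,
    card_filter_val_lt_of_le hq, nsmul_eq_mul]

lemma eq_of_le_of_winSum_le {b : Bid k} {q : ℕ} {c : ℝ} (hq : q ≤ k)
    (hge : ∀ j : Fin k, (j : ℕ) < q → c ≤ b j) (hsum : winSum b q ≤ q * c) :
    ∀ j : Fin k, (j : ℕ) < q → b j = c := by
  set W := univ.filter fun j : Fin k => (j : ℕ) < q
  have hW : ∀ j ∈ W, 0 ≤ b j - c := fun j hj => sub_nonneg.2 (hge j (mem_filter.1 hj).2)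
  have hzero : ∑ j ∈ W, (b j - c) = 0 := by
    refine le_antisymm ?_ (sum_nonneg hW)
    rw [sum_sub_distrib, sum_const, card_filter_val_lt_of_le hq, nsmul_eq_mul, ← winSum_eq_sum_filter]
    linarith
  intro j hj
  have := (sum_eq_zero_iff_of_nonneg hW).1 hzero j (by simpa [W] using hj)
  linarith

lemma sum_Icc_sub_telescope {G : Type*} [AddCommGroup G] (f : ℕ → G) {a c : ℕ} (hac : a ≤ c) :
    ∑ j ∈ Icc (a + 1) c, (f j - f (j - 1)) = f c - f a := by
  induction c, hac using Nat.le_induction with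
  | base => simp
  | succ c hac ih =>
    rw [sum_Icc_succ_top (by omega), ih, Nat.add_sub_cancel, sub_add_sub_cancel']

lemma ValidAlloc.le {b : Fin n → Bid k} {x : Fin n → ℕ} (hx : ValidAlloc b x) (i : Fin n) :
    x i ≤ k :=
  hx.1 ▸ single_le_sum (fun _ _ => Nat.zero_le _) (mem_univ i)

lemma validAlloc_of_separated {b : Fin n → Bid k} {x : Fin n → ℕ} (d : ℝ)
    (hsum : ∑ i, x i = k) (hwin : ∀ i (j : Fin k), (j : ℕ) < x i → d ≤ b i j)
    (hlose : ∀ i (j : Fin k), x i ≤ j → b i j ≤ d) : ValidAlloc b x :=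
  ⟨hsum, fun _ _ _ _ hj hj' => (hlose _ _ hj').trans (hwin _ _ hj)⟩

/-- Greedy construction: the next unit goes to a highest bid that is still losing. -/
lemma exists_partial_alloc {b : Fin n → Bid k} (hn : 0 < n) (hb : ∀ i, Antitone (b i))
    {t : ℕ} (ht : t ≤ k) :
    ∃ y : Fin n → ℕ, ∑ i, y i = t ∧
      ∀ i i' (j j' : Fin k), (j : ℕ) < y i → y i' ≤ j' → b i' j' ≤ b i j := by
  classical
  induction t with
  | zero => exact ⟨0, by simp, fun _ _ _ _ hj => absurd hj (Nat.not_lt_zero _)⟩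
  | succ t ih =>
    obtain ⟨y, hsum, hvalid⟩ := ih (by omega)
    set losing := univ.filter fun p : Fin n × Fin k => y p.1 ≤ p.2
    have hlosing : losing.Nonempty := by
      by_contra! hempty
      have hfull : ∀ i, k ≤ y i := fun i => by
        by_contra! hi
        have : (i, ⟨y i, hi⟩) ∈ losing := by simp [losing]
        simp [hempty] at this
      have : n * k ≤ t := by
        simpa [← hsum] using sum_le_sum fun i (_ : i ∈ univ) => hfull i
      nlinarith
    obtain ⟨⟨i₀, j₀⟩, hp₀, hmax⟩ := exists_max_image losing (fun p => b p.1 p.2) hlosing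
    have hy₀ : y i₀ ≤ j₀ := (mem_filter.1 hp₀).2
    refine ⟨y + Pi.single i₀ 1, by simp [sum_add_distrib, hsum], ?_⟩
    intro i i' j j' hj hj'
    have hlose : b i' j' ≤ b i₀ j₀ := by
      refine hmax (i', j') (mem_filter.2 ⟨mem_univ _, ?_⟩)
      have : y i' ≤ (y + Pi.single i₀ 1 : Fin n → ℕ) i' := by simp
      exact this.trans hj'
    by_cases hji : (j : ℕ) < y i
    · exact hvalid i i' j j' hji (le_trans (by simp) hj')
    · have hi : i = i₀ := by
        by_contra hne
        simp only [Pi.add_apply, Pi.single_eq_of_ne hne, add_zero] at hj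
        omega
      subst hi
      have hj₀ : j ≤ j₀ := by
        rw [Fin.le_def]; simp only [Pi.add_apply, Pi.single_eq_same, Order.lt_add_one_iff] at hj; omega
      exact hlose.trans (hb i hj₀)

lemma exists_validAlloc {b : Fin n → Bid k} (hn : 0 < n) (hb : ∀ i, Antitone (b i)) :
    ∃ y, ValidAlloc b y :=
  exists_partial_alloc hn hb le_rfl

lemma ValidAlloc.le_of_outbids {b : Fin n → Bid k} {y : Fin n → ℕ} (hy : ValidAlloc b y)
    {i : Fin n} {m : ℕ} (hm : m ≤ k)
    (hout : ∀ j : Fin k, (j : ℕ) < m → ∀ i' ≠ i, ∀ j', b i' j' < b i j) : m ≤ y i := by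
  by_contra! hlt
  obtain ⟨i', hi', hwin⟩ : ∃ i' ≠ i, 0 < y i' := by
    by_contra! hno
    have : ∑ i', y i' = k := hy.1
    have : ∑ i', y i' = y i :=
      sum_eq_single i (fun i' _ hne => Nat.eq_zero_of_le_zero (hno i' hne)) (by simp)
    omega
  have := hy.2 i' i ⟨0, by omega⟩ ⟨y i, by omega⟩ hwin le_rfl
  exact (hout ⟨y i, by omega⟩ hlt i' hi' _).not_ge this

def IsDiscNE (v : Fin n → ℕ → ℝ) (b : Fin n → Bid k) (x : Fin n → ℕ) : Prop :=
  ∀ (i : Fin n) (b' : Bid k), StdBid b' →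
    ∀ y : Fin n → ℕ, ValidAlloc (Function.update b i b') y →
      v i (y i) - winSum b' (y i) ≤ v i (x i) - winSum (b i) (x i)

namespace IsDiscNE

variable {v : Fin n → ℕ → ℝ} {b : Fin n → Bid k} {x : Fin n → ℕ} {d : ℝ}

lemma bid_eq (hNE : IsDiscNE v b x) (hx : ValidAlloc b x) (hd : 0 ≤ d)
    (hwin : ∀ i (j : Fin k), (j : ℕ) < x i → d ≤ b i j)
    (hlose : ∀ i (j : Fin k), x i ≤ j → b i j ≤ d) (i : Fin n) :
    ∀ j : Fin k, (j : ℕ) < x i → b i j = d := by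
  classical
  have hdev : ValidAlloc (Function.update b i (flatBid (x i) d)) x := by
    refine validAlloc_of_separated d hx.1 (fun i' j hj => ?_) (fun i' j hj => ?_) <;>
      rcases eq_or_ne i' i with rfl | hne
    · simp [flatBid, hj]
    · simpa [hne] using hwin i' j hj
    · simp [flatBid, not_lt.2 hj, hd]
    · simpa [hne] using hlose i' j hj
  have := hNE i _ (stdBid_flatBid hd) x hdev
  rw [winSum_flatBid d le_rfl (hx.le i)] at this
  exact eq_of_le_of_winSum_le (hx.le i) (hwin i) (by linarith)

lemma sub_mul_le (hNE : IsDiscNE v b x) {i : Fin n} (hv : IsValuation k (v i))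
    (hb : ∀ i, StdBid (b i)) (hd : 0 ≤ d) (hbd : ∀ i j, b i j ≤ d)
    (hpaid : winSum (b i) (x i) = x i * d) {m : ℕ} (hm : m ≤ k) :
    v i m - m * d ≤ v i (x i) - x i * d := by
  classical
  have hdev : ∀ c > d, v i m - m * c ≤ v i (x i) - x i * d := by
    intro c hc
    have hstd : ∀ i', Antitone (Function.update b i (flatBid m c) i') :=
      (Function.forall_update_iff b fun _ b' => Antitone b').2
        ⟨(stdBid_flatBid (hd.trans hc.le)).1, fun i' _ => (hb i').1⟩
    obtain ⟨y, hy⟩ := exists_validAlloc i.pos hstd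
    have hmy : m ≤ y i := hy.le_of_outbids hm fun j hj i' hi' j' => by
      simpa [hi', flatBid, hj] using (hbd i' j').trans_lt hc
    have := hNE i _ (stdBid_flatBid (hd.trans hc.le)) y hy
    rw [winSum_flatBid c hmy (hy.le i), hpaid] at this
    linarith [hv.2.2 m (y i) hmy (hy.le i)]
  have hlim : Filter.Tendsto (fun c => v i m - m * c) (nhdsWithin d (Set.Ioi d))
      (nhds (v i m - m * d)) :=
    ((continuous_const.sub (continuous_const.mul continuous_id)).tendsto d).mono_left
      nhdsWithin_le_nhds
  exact le_of_tendsto hlim (eventually_nhdsWithin_of_forall hdev)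

end IsDiscNE

end

theorem stmt18_general (n k : ℕ)
    -- arbitrary valuations
    (v : Fin n → ℕ → ℝ) (hv : ∀ i, IsValuation k (v i))
    -- the equilibrium bidding profile and its allocation
    (b : Fin n → Bid k) (hb : ∀ i, StdBid (b i))
    (x : Fin n → ℕ) (hx : ValidAlloc b x)
    -- `b` is a pure Nash equilibrium
    (hNE : ∀ (i : Fin n) (b' : Bid k), StdBid b' →
      ∀ y : Fin n → ℕ, ValidAlloc (Function.update b i b') y →
        v i (y i) - winSum b' (y i) ≤ v i (x i) - winSum (b i) (x i))
    -- `d` is the largest losing bid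
    (d : ℝ)
    (hd : IsGreatest {r : ℝ | ∃ (i : Fin n) (j : Fin k), x i ≤ (j : ℕ) ∧ b i j = r} d) :
    -- (i) every winning bid equals `d`
    (∀ i : Fin n, 1 ≤ x i → ∀ j : Fin k, (j : ℕ) < x i → b i j = d) ∧
    -- (ii)
    (∀ (i : Fin n) (ℓ : ℕ), 1 ≤ ℓ → ℓ ≤ x i →
      (ℓ : ℝ) * d ≤ ∑ j ∈ Finset.Icc (x i - ℓ + 1) (x i), (v i j - v i (j - 1))) ∧
    -- (iii)
    (∀ (i : Fin n) (ℓ : ℕ), 1 ≤ ℓ → ℓ ≤ k - x i →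
      (∑ j ∈ Finset.Icc (x i + 1) (x i + ℓ), (v i j - v i (j - 1))) ≤ (ℓ : ℝ) * d) := by
  replace hNE : IsDiscNE v b x := hNE
  obtain ⟨⟨i₀, j₀, hj₀, hd₀⟩, hmax⟩ := hd
  have hlose : ∀ i (j : Fin k), x i ≤ j → b i j ≤ d := fun i j hj => hmax ⟨i, j, hj, rfl⟩
  have hwin : ∀ i (j : Fin k), (j : ℕ) < x i → d ≤ b i j :=
    fun i j hj => hd₀ ▸ hx.2 i i₀ j j₀ hj hj₀
  have hd : 0 ≤ d := hd₀ ▸ (hb i₀).2 j₀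
  have hwin_eq := hNE.bid_eq hx hd hwin hlose
  have hbd : ∀ i j, b i j ≤ d := fun i j =>
    if hj : (j : ℕ) < x i then (hwin_eq i j hj).le else hlose i j (not_lt.1 hj)
  have hkey : ∀ i m, m ≤ k → v i m - m * d ≤ v i (x i) - x i * d :=
    fun i _ hm => hNE.sub_mul_le (hv i) hb hd hbd (winSum_eq_mul (hx.le i) (hwin_eq i)) hm
  refine ⟨fun i _ => hwin_eq i, fun i ℓ _ hℓ => ?_, fun i ℓ _ hℓ => ?_⟩
  · have := hkey i (x i - ℓ) ((Nat.sub_le _ _).trans (hx.le i))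
    rw [sum_Icc_sub_telescope _ (Nat.sub_le _ _)]
    rw [Nat.cast_sub hℓ] at this
    linarith
  · have := hkey i (x i + ℓ) (by have := hx.le i; omega)
    rw [sum_Icc_sub_telescope _ (Nat.le_add_right _ _)]
    push_cast at this
    linarith

/-- Properties of pure Nash equilibria of the Discriminatory
Auction: if `b` is a pure Nash equilibrium and `d` is the largest losing bid, then
(i) all winning bids equal `d`; (ii) `ℓ·d ≤ ∑_{j=xᵢ-ℓ+1}^{xᵢ} mᵢ(j)` for every
`ℓ ∈ {1,…,xᵢ}`; (iii) `∑_{j=xᵢ+1}^{xᵢ+ℓ} mᵢ(j) ≤ ℓ·d` for every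
`ℓ ∈ {1,…,k-xᵢ}`, where `mᵢ(j) = vᵢ(j) - vᵢ(j-1)` are the marginal values. -/
theorem stmt18 (n k : ℕ) (hk : 1 ≤ k) (hn : 2 ≤ n)
    -- arbitrary valuations
    (v : Fin n → ℕ → ℝ) (hv : ∀ i, IsValuation k (v i))
    -- the equilibrium bidding profile and its allocation
    (b : Fin n → Bid k) (hb : ∀ i, StdBid (b i))
    (x : Fin n → ℕ) (hx : ValidAlloc b x)
    -- `b` is a pure Nash equilibrium
    (hNE : ∀ (i : Fin n) (b' : Bid k), StdBid b' →
      ∀ y : Fin n → ℕ, ValidAlloc (Function.update b i b') y →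
        v i (y i) - winSum b' (y i) ≤ v i (x i) - winSum (b i) (x i))
    -- `d` is the largest losing bid
    (d : ℝ)
    (hd : IsGreatest {r : ℝ | ∃ (i : Fin n) (j : Fin k), x i ≤ (j : ℕ) ∧ b i j = r} d) :
    -- (i) every winning bid equals `d`
    (∀ i : Fin n, 1 ≤ x i → ∀ j : Fin k, (j : ℕ) < x i → b i j = d) ∧
    -- (ii)
    (∀ (i : Fin n) (ℓ : ℕ), 1 ≤ ℓ → ℓ ≤ x i →
      (ℓ : ℝ) * d ≤ ∑ j ∈ Finset.Icc (x i - ℓ + 1) (x i), (v i j - v i (j - 1))) ∧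
    -- (iii)
    (∀ (i : Fin n) (ℓ : ℕ), 1 ≤ ℓ → ℓ ≤ k - x i →
      (∑ j ∈ Finset.Icc (x i + 1) (x i + ℓ), (v i j - v i (j - 1))) ≤ (ℓ : ℝ) * d) :=
  stmt18_general n k v hv b hb x hx hNE d hd

end
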